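/- arXiv:2102.10216 — 4 statements merged into one kernel-verified Lean document; each statement's English description precedes it below -/
import Mathlib

section
/- Let T be as above (T_{ii} = A_i + K_i, T_{ij} = K_j for i ≠ j, A_i, K_i > 0, A_i ≥ (n-1)K_i) and let D = diag(c_1,…,c_n) with c_i > 0 for all i. Then every eigenvalue of the matrix J = −T·D has strictly negative real part. -/
open Finset Matrix

/-- If `μ` is an eigenvalue with `0 ≤ re μ`, then `A - μ • 1` would still be strictly column
diagonally dominant, hence invertible. -/
theorem re_lt_zero_of_mulVec_eq_smul_of_col_dominant {𝕜 ι : Type*} [RCLike 𝕜] [Fintype ι]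
    [DecidableEq ι] {A : Matrix ι ι 𝕜}
    (hA : ∀ k, RCLike.re (A k k) + ∑ i ∈ univ.erase k, ‖A i k‖ < 0)
    {μ : 𝕜} {v : ι → 𝕜} (hv : v ≠ 0) (hμ : A *ᵥ v = μ • v) : RCLike.re μ < 0 := by
  by_contra! hre
  have hsing : (A - μ • 1) *ᵥ v = 0 := by
    rw [sub_mulVec, hμ, smul_mulVec, one_mulVec, sub_self]
  refine det_ne_zero_of_sum_col_lt_diag (A := A - μ • 1) (fun k => ?_)
    (exists_mulVec_eq_zero_iff.mp ⟨v, hv, hsing⟩)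
  have hoff : ∑ i ∈ univ.erase k, ‖(A - μ • 1) i k‖ = ∑ i ∈ univ.erase k, ‖A i k‖ :=
    sum_congr rfl fun i hi => by simp [one_apply_ne (ne_of_mem_erase hi)]
  have hdiag : RCLike.re μ - RCLike.re (A k k) ≤ ‖(A - μ • 1) k k‖ := by
    calc RCLike.re μ - RCLike.re (A k k) = -RCLike.re ((A - μ • 1) k k) := by simp
      _ ≤ ‖(A - μ • 1) k k‖ := (neg_le_abs _).trans (RCLike.abs_re_le_norm _)
  linarith [hA k]

theorem sum_erase_norm_neg_mul_diagonal_col {n : ℕ} (T : Matrix (Fin n) (Fin n) ℝ)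
    (c : Fin n → ℝ) (k : Fin n) (a : ℝ) (hT : ∀ i, i ≠ k → T i k = a) :
    ∑ i ∈ univ.erase k, ‖(-(T * diagonal c)) i k‖ = ((n : ℝ) - 1) * ‖a * c k‖ := by
  have hconst : ∀ i ∈ univ.erase k, ‖(-(T * diagonal c)) i k‖ = ‖a * c k‖ := fun i hi => by
    rw [neg_apply, mul_diagonal, hT i (ne_of_mem_erase hi), norm_neg]
  rw [sum_congr rfl hconst, sum_erase_eq_sub (mem_univ k), sum_const, card_univ,
    Fintype.card_fin, nsmul_eq_mul]
  ring

theorem stmt_5_general (n : ℕ) (A K : Fin n → ℝ)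
    (hK : ∀ i, 0 < K i)
    (hAK : ∀ i, ((n : ℝ) - 1) * K i ≤ A i)
    (T : Matrix (Fin n) (Fin n) ℝ)
    (hT : ∀ i j, T i j = if i = j then A i + K i else K j)
    (c : Fin n → ℝ) (hc : ∀ i, 0 < c i) :
    ∀ (μ : ℂ) (v : Fin n → ℂ), v ≠ 0 →
      (((-(T * Matrix.diagonal c)).map (Complex.ofReal)).mulVec v = μ • v) →
      μ.re < 0 := by
  intro μ v hv hμ
  refine re_lt_zero_of_mulVec_eq_smul_of_col_dominant (fun k => ?_) hv hμ
  have hoff := sum_erase_norm_neg_mul_diagonal_col T c k (K k)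
    fun i hik => by rw [hT, if_neg hik]
  have hdiag : (-(T * diagonal c)) k k = -((A k + K k) * c k) := by
    rw [neg_apply, mul_diagonal, hT, if_pos rfl]
  simp only [map_apply, Complex.norm_real, RCLike.re_to_complex, Complex.ofReal_re, hoff, hdiag,
    Real.norm_of_nonneg (mul_pos (hK k) (hc k)).le]
  nlinarith [hAK k, hK k, hc k]

theorem stmt_5 (n : ℕ) (hn : 2 ≤ n) (A K : Fin n → ℝ)
    (hA : ∀ i, 0 < A i) (hK : ∀ i, 0 < K i)
    (hAK : ∀ i, ((n : ℝ) - 1) * K i ≤ A i)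
    (T : Matrix (Fin n) (Fin n) ℝ)
    (hT : ∀ i j, T i j = if i = j then A i + K i else K j)
    (c : Fin n → ℝ) (hc : ∀ i, 0 < c i) :
    ∀ (μ : ℂ) (v : Fin n → ℂ), v ≠ 0 →
      (((-(T * Matrix.diagonal c)).map (Complex.ofReal)).mulVec v = μ • v) →
      μ.re < 0 :=
  stmt_5_general n A K hK hAK T hT c hc
end

section
/- Consider the star network Kuramoto–Sakaguchi model: θ̇_0 = ω_0 + (A/n)Σ_{i=1}^n sin(θ_i − θ_0 − α), θ̇_i = ω + A sin(θ_0 − θ_i − α) for i = 1,…,n, with A > 0 and α ∈ [0, π/2). If there exists a solution with θ̇_0(t) = θ̇_1(t) = ⋯ = θ̇_n(t) for some time t, then A ≥ |ω_0 − ω| / (2 cos α). -/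
open Finset

theorem stmt_6 (n : ℕ) (hn : 2 ≤ n) (ω₀ ω A α : ℝ) (hA : 0 < A)
    (hα : 0 ≤ α ∧ α < Real.pi / 2)
    (θ₀ : ℝ) (θ : Fin n → ℝ)
    (hsync : ∀ i, ω₀ + (A / n) * ∑ j, Real.sin (θ j - θ₀ - α)
      = ω + A * Real.sin (θ₀ - θ i - α)) :
    |ω₀ - ω| / (2 * Real.cos α) ≤ A := by
  have hcos : 0 < Real.cos α :=
    Real.cos_pos_of_mem_Ioo ⟨by linarith [Real.pi_pos, hα.1, hα.2], hα.2⟩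
  have hn0 : (0:ℝ) < n := by positivity
  -- sum the sync equation over i
  have hsum : (n:ℝ) * (ω₀ - ω)
      = A * ∑ i, (Real.sin (θ₀ - θ i - α) - Real.sin (θ i - θ₀ - α)) := by
    have := Finset.sum_congr rfl (fun i (_ : i ∈ Finset.univ) => hsync i)
    simp only [Finset.sum_add_distrib, Finset.sum_const, Finset.card_univ,
      Fintype.card_fin, nsmul_eq_mul, ← Finset.mul_sum] at this
    rw [Finset.sum_sub_distrib]
    field_simp at this ⊢
    linarith
  have hterm : ∀ i : Fin n,
      Real.sin (θ₀ - θ i - α) - Real.sin (θ i - θ₀ - α)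
        = -2 * Real.sin (θ i - θ₀) * Real.cos α := by
    intro i
    have h1 : θ₀ - θ i - α = -(θ i - θ₀) - α := by ring
    rw [h1, Real.sin_sub, Real.sin_sub, Real.sin_neg, Real.cos_neg]
    ring
  have hbound : |(n:ℝ) * (ω₀ - ω)| ≤ A * (n * (2 * Real.cos α)) := by
    rw [hsum, abs_mul, abs_of_pos hA]
    refine mul_le_mul_of_nonneg_left ?_ hA.le
    calc |∑ i, (Real.sin (θ₀ - θ i - α) - Real.sin (θ i - θ₀ - α))|
        ≤ ∑ i : Fin n, |Real.sin (θ₀ - θ i - α) - Real.sin (θ i - θ₀ - α)| :=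
          Finset.abs_sum_le_sum_abs _ _
      _ ≤ ∑ i : Fin n, 2 * Real.cos α := by
          refine Finset.sum_le_sum fun i _ => ?_
          rw [hterm i, abs_mul, abs_mul, abs_of_pos hcos]
          have := abs_nonneg (Real.sin (θ i - θ₀))
          have h2 : |Real.sin (θ i - θ₀)| ≤ 1 := Real.abs_sin_le_one _
          rw [show |(-2:ℝ)| = 2 from by norm_num]
          nlinarith [hcos.le]
      _ = n * (2 * Real.cos α) := by simp [Finset.card_univ]
  rw [abs_mul, abs_of_pos hn0] at hbound
  rw [div_le_iff₀ (by positivity)]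
  nlinarith
end

section
/- Let g_i(y) = (1/2)(ω_0 − ω) − (A/(2n)) Σ_{j=1}^n sin(2y_j + α) − (A/2) sin(2y_i − α) with A > 0, α ∈ [0, π/2), n ≥ 2. Suppose y* has all components equal to some s with |s| < π/4 and satisfies g(y*) = 0, and assume ω_0 > ω and A > (ω_0 − ω)/(2 cos α). Then the Jacobian matrix J(y*) = (∂g_i/∂y_j)|_{y=y*} is strictly row diagonally dominant with negative diagonal entries, i.e., for every i, J_{ii}(y*) < 0 and |J_{ii}(y*)| > Σ_{j≠i} |J_{ij}(y*)|. -/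
open Finset

theorem stmt_8 (n : ℕ) (hn : 2 ≤ n) (ω₀ ω A α : ℝ) (hA : 0 < A)
    (hα : 0 ≤ α ∧ α < Real.pi / 2)
    (hω : ω < ω₀) (hcond : (ω₀ - ω) / (2 * Real.cos α) < A)
    (s : ℝ) (hs : s = (1 / 2) * Real.arcsin ((ω₀ - ω) / (2 * A * Real.cos α)))
    (y : Fin n → ℝ) (hy : ∀ i, y i = s)
    (J : Matrix (Fin n) (Fin n) ℝ)
    (hJ : ∀ i j, J i j = if i = j
      then -(A / n) * Real.cos (2 * y i + α) - A * Real.cos (2 * y i - α)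
      else -(A / n) * Real.cos (2 * y j + α)) :
    ∀ i, J i i < 0 ∧ ∑ j ∈ Finset.univ.erase i, |J i j| < |J i i| := by
  have hpi := Real.pi_pos
  have hcosα : 0 < Real.cos α :=
    Real.cos_pos_of_mem_Ioo ⟨by linarith [hα.1], hα.2⟩
  have hsinα : 0 ≤ Real.sin α :=
    Real.sin_nonneg_of_nonneg_of_le_pi hα.1 (by linarith [hα.2])
  set x := (ω₀ - ω) / (2 * A * Real.cos α) with hxdef
  have hx0 : 0 < x := div_pos (by linarith) (by positivity)
  have hx1 : x < 1 := by
    rw [hxdef, div_lt_one (by positivity)]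
    have := (div_lt_iff₀ (by positivity : (0:ℝ) < 2 * Real.cos α)).mp hcond
    nlinarith
  set t := Real.arcsin x with htdef
  have ht0 : 0 < t := Real.arcsin_pos.mpr hx0
  have ht1 : t < Real.pi / 2 := Real.arcsin_lt_pi_div_two.mpr hx1
  have hsint : 0 < Real.sin t := Real.sin_pos_of_pos_of_lt_pi ht0 (by linarith)
  have hcost : 0 < Real.cos t := Real.cos_pos_of_mem_Ioo ⟨by linarith, ht1⟩
  have h2s : 2 * s = t := by rw [hs]; ring
  set c := Real.cos (t + α) with hcdef
  set d := Real.cos (t - α) with hddef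
  have hd : 0 < d :=
    Real.cos_pos_of_mem_Ioo ⟨by linarith [hα.2], by linarith [hα.1]⟩
  have hce : c = Real.cos t * Real.cos α - Real.sin t * Real.sin α := Real.cos_add t α
  have hde : d = Real.cos t * Real.cos α + Real.sin t * Real.sin α := Real.cos_sub t α
  clear_value c d t x
  have hdc : c ≤ d := by nlinarith [mul_nonneg hsint.le hsinα]
  have hdc2 : -c < d := by nlinarith [mul_pos hcost hcosα]
  have hn0 : (0:ℝ) < (n:ℝ) := by positivity
  have hn2 : (2:ℝ) ≤ (n:ℝ) := by exact_mod_cast hn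
  have han : 0 < A / (n:ℝ) := div_pos hA hn0
  have hanA : (n:ℝ) * (A / (n:ℝ)) = A := by field_simp
  intro i
  have hpos : 0 < A / (n:ℝ) * c + A * d := by
    rcases le_or_gt 0 c with h | h
    · have := mul_nonneg han.le h
      have := mul_pos hA hd
      linarith
    · have hAnle : A / (n:ℝ) ≤ A := by
        rw [div_le_iff₀ hn0]; nlinarith
      have h1 : A * c ≤ A / (n:ℝ) * c := mul_le_mul_of_nonpos_right hAnle h.le
      have h2 : 0 < A * c + A * d := by
        rw [← mul_add]; exact mul_pos hA (by linarith)
      linarith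
  have hJii : J i i = -(A / (n:ℝ) * c + A * d) := by
    rw [hJ i i, if_pos rfl, hy i, h2s, ← hcdef, ← hddef]; ring
  constructor
  · rw [hJii]; linarith
  · have habsii : |J i i| = A / (n:ℝ) * c + A * d := by
      rw [hJii, abs_neg, abs_of_pos hpos]
    have hsum : ∑ j ∈ Finset.univ.erase i, |J i j| = ((n - 1 : ℕ) : ℝ) * |A / (n:ℝ) * c| := by
      rw [Finset.sum_congr rfl (fun j hj => by
        rw [hJ i j, if_neg (Ne.symm (Finset.ne_of_mem_erase hj)), hy j, h2s, ← hcdef,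
          neg_mul, abs_neg])]
      rw [Finset.sum_const, Finset.card_erase_of_mem (Finset.mem_univ i), Finset.card_univ,
        Fintype.card_fin, nsmul_eq_mul]
    have hcast : ((n - 1 : ℕ) : ℝ) = (n:ℝ) - 1 := by
      have : 1 ≤ n := by omega
      push_cast [this]; ring
    rw [hsum, habsii, hcast, abs_mul, abs_of_pos han]
    clear hJ hy hJii habsii hsum hcast hs hxdef htdef hcdef hddef hce hde hcond
    clear J y i
    rcases abs_cases c with ⟨hc, hc0⟩ | ⟨hc, hc0⟩
    · rw [hc]
      nlinarith [mul_pos han hd, mul_le_mul_of_nonneg_left hdc han.le]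
    · rw [hc]
      have e1 : 0 < A * c + A * d := by
        rw [← mul_add]; exact mul_pos hA (by linarith)
      have e2 : ((n:ℝ) - 1) * (A / (n:ℝ) * -c) = A / (n:ℝ) * c - A * c := by
        linear_combination (-c) * hanA
      rw [e2]; linarith
end

section
/- Let n ≥ 2, c ∈ ℝ, and T the matrix T_{ii} = A_i + K_i, T_{ij} = K_j (i ≠ j) with A_i, K_i > 0, A_i ≥ (n-1)K_i. Suppose a partition {C_1,…,C_m} of {1,…,n} is such that A_i = A_j whenever i, j lie in the same cell, and A_i ≠ A_j whenever they lie in different cells. If x* satisfies T sin(x*) = c·1_n with |x*_i| < π/2 for all i, then x*_i = x*_j for i, j in the same cell, and x*_i ≠ x*_j for i, j in different cells. -/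
theorem stmt_14 (n m : ℕ) (hn : 2 ≤ n) (A K : Fin n → ℝ)
    (hA : ∀ i, 0 < A i) (hK : ∀ i, 0 < K i)
    (hAK : ∀ i, ((n : ℝ) - 1) * K i ≤ A i)
    (T : Matrix (Fin n) (Fin n) ℝ)
    (hT : ∀ i j, T i j = if i = j then A i + K i else K j)
    (C : Fin n → Fin m) (hC : Function.Surjective C)
    (hcell : ∀ i j, C i = C j ↔ A i = A j)
    (c : ℝ) (hc : c ≠ 0)
    (x : Fin n → ℝ) (hx : ∀ i, |x i| < Real.pi / 2)
    (heq : T.mulVec (fun i => Real.sin (x i)) = fun _ => c) :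
    ∀ i j, (C i = C j → x i = x j) ∧ (C i ≠ C j → x i ≠ x j) := by
  set S := ∑ j, K j * Real.sin (x j) with hS
  have hrow : ∀ i, A i * Real.sin (x i) + S = c := by
    intro i
    have h := congrFun heq i
    simp only [Matrix.mulVec, dotProduct] at h
    have hterm : ∀ j : Fin n, T i j * Real.sin (x j) =
        (if j = i then A i * Real.sin (x i) else 0) + K j * Real.sin (x j) := by
      intro j
      rw [hT]
      by_cases hij : i = j
      · subst hij; simp; ring
      · simp [hij, Ne.symm hij]
    rw [← h]
    simp only [hterm, Finset.sum_add_distrib, Finset.sum_ite_eq' Finset.univ i,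
      Finset.mem_univ, if_true, hS]
  have hkey : ∀ i j, A i * Real.sin (x i) = A j * Real.sin (x j) := by
    intro i j
    have := hrow i
    have h2 := hrow j
    linarith
  -- sin x i ≠ 0 for all i
  have hsne : ∀ i, Real.sin (x i) ≠ 0 := by
    intro i hsi
    have hall : ∀ j, Real.sin (x j) = 0 := by
      intro j
      have := hkey i j
      rw [hsi, mul_zero] at this
      exact (mul_eq_zero.mp this.symm).resolve_left (ne_of_gt (hA j))
    apply hc
    have := hrow i
    rw [hsi, hS] at this
    simp only [mul_zero, zero_add] at this
    rw [← this]
    apply Finset.sum_eq_zero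
    intro j _
    rw [hall j, mul_zero]
  have hinj : ∀ i j, Real.sin (x i) = Real.sin (x j) → x i = x j := by
    intro i j h
    have hi := abs_lt.mp (hx i)
    have hj := abs_lt.mp (hx j)
    exact Real.injOn_sin ⟨le_of_lt hi.1, le_of_lt hi.2⟩ ⟨le_of_lt hj.1, le_of_lt hj.2⟩ h
  intro i j
  constructor
  · intro hcij
    have hAij := (hcell i j).mp hcij
    have := hkey i j
    rw [hAij] at this
    exact hinj i j (mul_left_cancel₀ (ne_of_gt (hA j)) this)
  · intro hcij hxij
    apply hcij
    rw [hcell]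
    have := hkey i j
    rw [hxij] at this
    exact mul_right_cancel₀ (hsne j) this
end
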